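/- Let n be an integer with |n| ≥ 2 and let P be the (finite, nonempty) set of prime numbers dividing n. The diagonal ring homomorphism φ : ℤ[1/n] → (∏_{p ∈ P} ℚ_p) × ℝ, whose coordinates are the natural inclusions of ℤ[1/n] into each p-adic field ℚ_p and into ℝ, is injective, its image is a discrete additive subgroup of the locally compact topological additive group (∏_{p ∈ P} ℚ_p) × ℝ, and the quotient topological group ((∏_{p ∈ P} ℚ_p) × ℝ) / φ(ℤ[1/n]) is compact. -/

import Mathlib

namespace Adelic

/-- `ℤ[1/n]`, the subring of `ℚ` generated by `1/n`. -/
def Rn (n : ℤ) : Subring ℚ := Subring.closure {1 / (n : ℚ)}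

/-- The set of primes dividing `n`. -/
def PrimesDiv (n : ℤ) : Type := {p : ℕ // Fact p.Prime ∧ (p : ℤ) ∣ n}

instance (n : ℤ) (p : PrimesDiv n) : Fact p.1.Prime := p.2.1

/-- The product `∏_{p ∣ n} ℚ_p`. -/
abbrev QpProd (n : ℤ) : Type := ∀ p : PrimesDiv n, ℚ_[p.1]

/-- The diagonal ring homomorphism `ℤ[1/n] → (∏_{p ∣ n} ℚ_p) × ℝ`, whose
coordinates are the natural inclusions. -/
noncomputable def diagEmb (n : ℤ) : Rn n →+* QpProd n × ℝ :=
  RingHom.prod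
    (Pi.ringHom fun p => (Rat.castHom ℚ_[p.1]).comp (Rn n).subtype)
    ((Rat.castHom ℝ).comp (Rn n).subtype)

end Adelic

open Adelic

/-!
Injectivity is read off the real coordinate. An element of `ℤ[1/n]` is integral at every prime
not dividing `n`; if it is also integral at the primes dividing `n` it is an integer, and an
integer of absolute value `< 1` is `0`: this gives discreteness. For cocompactness, every
`x ∈ ℚ_p` lies within distance `1` of some `a / p ^ k`, which is integral at all other primes.
Summing these approximations over `p ∣ n` and correcting the real coordinate by an integer moves
any point into the compact set `(∏_{p ∣ n} ℤ_p) × [0, 1]`.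
-/

section

variable {G : Type*} [AddGroup G] [TopologicalSpace G]

theorem AddSubgroup.discreteTopology_of_isOpen_of_mem_eq_zero [IsTopologicalAddGroup G]
    (S : AddSubgroup G) {U : Set G} (hU : IsOpen U) (h0 : (0 : G) ∈ U)
    (hUS : ∀ x ∈ S, x ∈ U → x = 0) : DiscreteTopology S := by
  rw [discreteTopology_iff_isOpen_singleton_zero, isOpen_induced_iff]
  refine ⟨U, hU, Set.ext fun x => ⟨fun hx => Subtype.ext (hUS x x.2 hx), ?_⟩⟩
  rintro rfl
  exact h0

theorem QuotientAddGroup.compactSpace_of_forall_exists_sub_mem (S : AddSubgroup G) {K : Set G}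
    (hK : IsCompact K) (hSK : ∀ y, ∃ g ∈ S, y - g ∈ K) : CompactSpace (G ⧸ S) where
  isCompact_univ := by
    refine (hK.image continuous_mk).of_isClosed_subset isClosed_univ fun y _ => ?_
    obtain ⟨y, rfl⟩ := mk_surjective y
    obtain ⟨g, hg, hyg⟩ := hSK y
    exact ⟨y - g, hyg, QuotientAddGroup.eq.mpr (by simpa [sub_eq_add_neg] using hg)⟩

end

theorem Padic.not_dvd_den_of_norm_le_one {p : ℕ} [Fact p.Prime] {r : ℚ}
    (h : ‖(r : ℚ_[p])‖ ≤ 1) : ¬ p ∣ r.den := by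
  have := PadicInt.isUnit_den r h
  rw [PadicInt.isUnit_iff, PadicInt.norm_natCast_eq_one_iff] at this
  exact (Nat.Prime.coprime_iff_not_dvd Fact.out).mp this

theorem Rat.den_eq_one_of_forall_norm_padic_le_one {r : ℚ}
    (h : ∀ (p : ℕ) [Fact p.Prime], ‖(r : ℚ_[p])‖ ≤ 1) : r.den = 1 :=
  Nat.eq_one_iff_not_exists_prime_dvd.mpr fun p hp =>
    haveI : Fact p.Prime := ⟨hp⟩
    Padic.not_dvd_den_of_norm_le_one (h p)

theorem Padic.norm_ratCast_div_prime_pow_le_one {p q : ℕ} [Fact p.Prime] [Fact q.Prime]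
    (hqp : q ≠ p) (a : ℤ) (k : ℕ) : ‖((a / q ^ k : ℚ) : ℚ_[p])‖ ≤ 1 := by
  have hq : ‖(q : ℚ_[p])‖ = 1 := by
    rw [Padic.norm_natCast_eq_one_iff]
    exact (Nat.coprime_primes Fact.out Fact.out).mpr hqp.symm
  push_cast
  rw [norm_div, norm_pow, hq, one_pow, div_one]
  exact Padic.norm_int_le_one a

theorem Padic.exists_norm_sub_div_pow_le_one {p : ℕ} [Fact p.Prime] (x : ℚ_[p]) :
    ∃ (a : ℤ) (k : ℕ), ‖x - ((a / p ^ k : ℚ) : ℚ_[p])‖ ≤ 1 := by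
  have hp : (1 : ℝ) < p := mod_cast (Fact.out : p.Prime).one_lt
  -- `x p ^ k` is a `p`-adic integer for large `k`; approximate it by an integer modulo `p ^ k`.
  obtain ⟨k, hk⟩ := pow_unbounded_of_one_lt ‖x‖ hp
  have hpk : ‖(p : ℚ_[p]) ^ k‖ = ((p : ℝ) ^ k)⁻¹ := by
    rw [Padic.norm_p_pow, zpow_neg, zpow_natCast]
  have hu : ‖x * (p : ℚ_[p]) ^ k‖ ≤ 1 := by
    rw [norm_mul, hpk, ← div_eq_mul_inv]
    exact div_le_one_of_le₀ hk.le (by positivity)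
  set u : ℤ_[p] := ⟨x * (p : ℚ_[p]) ^ k, hu⟩
  have happr := (PadicInt.norm_le_pow_iff_mem_span_pow _ k).mpr (u.appr_spec k)
  refine ⟨u.appr k, k, ?_⟩
  have hsub : x - (((u.appr k : ℤ) / p ^ k : ℚ) : ℚ_[p]) =
      (u - u.appr k : ℤ_[p]) / (p : ℚ_[p]) ^ k := by
    have : (p : ℚ_[p]) ^ k ≠ 0 := pow_ne_zero _ (by exact_mod_cast (Fact.out : p.Prime).ne_zero)
    push_cast
    field_simp
    rfl
  rw [PadicInt.norm_def, zpow_neg, zpow_natCast] at happr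
  rw [hsub, norm_div, hpk, div_inv_eq_mul]
  rwa [← le_div_iff₀ (by positivity), one_div]

namespace Adelic

variable {n : ℤ}

theorem PrimesDiv.finite (hn : n ≠ 0) : Finite (PrimesDiv n) :=
  Finite.of_injective (β := n.natAbs.primeFactors)
    (fun p => ⟨p.1, Nat.mem_primeFactors.mpr
      ⟨p.2.1.out, Int.natCast_dvd.mp p.2.2, Int.natAbs_ne_zero.mpr hn⟩⟩)
    fun _ _ h => Subtype.ext (Subtype.mk.inj h)

theorem intCast_mem_Rn (a : ℤ) : (a : ℚ) ∈ Rn n := intCast_mem (Rn n) a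

theorem div_pow_mem_Rn (hn : n ≠ 0) {p : ℕ} (hp : (p : ℤ) ∣ n) (a : ℤ) (k : ℕ) :
    (a / p ^ k : ℚ) ∈ Rn n := by
  obtain ⟨m, rfl⟩ := hp
  have hm : (m : ℚ) ≠ 0 := by exact_mod_cast right_ne_zero_of_mul hn
  have hinv : (p : ℚ)⁻¹ = m * (1 / ((p * m : ℤ) : ℚ)) := by
    push_cast
    field_simp
  rw [div_eq_mul_inv, ← inv_pow, hinv]
  exact mul_mem (intCast_mem_Rn a)
    (pow_mem (mul_mem (intCast_mem_Rn m) (Subring.subset_closure rfl)) k)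

theorem norm_le_one_of_mem_Rn {p : ℕ} [Fact p.Prime] (hp : ¬ (p : ℤ) ∣ n) {x : ℚ}
    (hx : x ∈ Rn n) : ‖(x : ℚ_[p])‖ ≤ 1 := by
  suffices Rn n ≤ (PadicInt.subring p).comap (Rat.castHom ℚ_[p]) from this hx
  refine Subring.closure_le.mpr (Set.singleton_subset_iff.mpr ?_)
  have : ‖(n : ℚ_[p])‖ = 1 := by
    rw [Padic.norm_intCast_eq_one_iff]
    exact ((Nat.prime_iff_prime_int.mp Fact.out).coprime_iff_not_dvd.mpr hp).symm
  simp [this]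

theorem den_eq_one_of_mem_Rn {x : ℚ} (hx : x ∈ Rn n)
    (h : ∀ (p : ℕ) [Fact p.Prime], (p : ℤ) ∣ n → ‖(x : ℚ_[p])‖ ≤ 1) : x.den = 1 :=
  Rat.den_eq_one_of_forall_norm_padic_le_one fun p _ =>
    if hp : (p : ℤ) ∣ n then h p hp else norm_le_one_of_mem_Rn hp hx

theorem eq_zero_of_mem_Rn {x : ℚ} (hx : x ∈ Rn n)
    (h : ∀ (p : ℕ) [Fact p.Prime], (p : ℤ) ∣ n → ‖(x : ℚ_[p])‖ ≤ 1)
    (hx1 : |(x : ℝ)| < 1) : x = 0 := by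
  rw [← Rat.coe_int_num_of_den_eq_one (den_eq_one_of_mem_Rn hx h)] at hx1 ⊢
  have : |x.num| < 1 := by exact_mod_cast hx1
  simpa [Int.abs_lt_one_iff] using this

theorem exists_mem_Rn_forall_norm_sub_le_one (hn : n ≠ 0) (x : QpProd n) :
    ∃ s ∈ Rn n, ∀ p, ‖x p - (s : ℚ_[p.1])‖ ≤ 1 := by
  classical
  have := PrimesDiv.finite hn
  have := Fintype.ofFinite (PrimesDiv n)
  choose a k hak using fun p : PrimesDiv n => Padic.exists_norm_sub_div_pow_le_one (x p)
  set r : PrimesDiv n → ℚ := fun p => a p / p.1 ^ k p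
  refine ⟨∑ p, r p, sum_mem fun p _ => div_pow_mem_Rn hn p.2.2 _ _, fun p => ?_⟩
  rw [← PadicInt.mem_subring_iff, ← Finset.add_sum_erase _ _ (Finset.mem_univ p), Rat.cast_add,
    sub_add_eq_sub_sub, Rat.cast_sum]
  refine sub_mem (hak p) (sum_mem fun q hq => Padic.norm_ratCast_div_prime_pow_le_one ?_ _ _)
  exact fun h => (Finset.mem_erase.mp hq).1 (Subtype.ext h)

@[simp]
theorem diagEmb_fst_apply (x : Rn n) (p : PrimesDiv n) :
    (diagEmb n x).1 p = ((x : ℚ) : ℚ_[p.1]) :=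
  rfl

@[simp]
theorem diagEmb_snd (x : Rn n) : (diagEmb n x).2 = ((x : ℚ) : ℝ) :=
  rfl

theorem diagEmb_injective (n : ℤ) : Function.Injective (diagEmb n) := fun _ _ h =>
  Subtype.ext (by simpa using congrArg Prod.snd h)

theorem discreteTopology_range_diagEmb (hn : n ≠ 0) :
    DiscreteTopology ((diagEmb n).toAddMonoidHom.range : AddSubgroup (QpProd n × ℝ)) := by
  have := PrimesDiv.finite hn
  refine AddSubgroup.discreteTopology_of_isOpen_of_mem_eq_zero _
    (U := (Set.univ.pi fun p : PrimesDiv n => Metric.ball (0 : ℚ_[p.1]) 1) ×ˢ Metric.ball 0 1)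
    ((isOpen_set_pi Set.finite_univ fun _ _ => Metric.isOpen_ball).prod Metric.isOpen_ball)
    (by simp) ?_
  rintro _ ⟨x, rfl⟩ ⟨hfin, hinf⟩
  have hx : (x : ℚ) = 0 := by
    refine eq_zero_of_mem_Rn x.2 (fun p _ hp => ?_) ?_
    · exact (mem_ball_zero_iff.mp (hfin ⟨p, ⟨‹_›, hp⟩⟩ trivial)).le
    · rw [← Real.norm_eq_abs]
      exact mem_ball_zero_iff.mp hinf
  simp [ZeroMemClass.coe_eq_zero.mp hx]

theorem exists_sub_diagEmb_mem (hn : n ≠ 0) (y : QpProd n × ℝ) : ∃ g : Rn n,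
    y - diagEmb n g ∈ (Set.univ.pi fun _ => Metric.closedBall 0 1) ×ˢ Set.Icc 0 1 := by
  obtain ⟨s, hs, hys⟩ := exists_mem_Rn_forall_norm_sub_le_one hn y.1
  refine ⟨⟨s + ⌊y.2 - s⌋, add_mem hs (intCast_mem_Rn _)⟩, fun p _ => ?_, ?_⟩
  · simpa [sub_add_eq_sub_sub] using
      sub_mem (hys p) (intCast_mem (PadicInt.subring p.1) ⌊y.2 - s⌋)
  · simpa [sub_add_eq_sub_sub, Int.self_sub_floor] using
      (⟨Int.fract_nonneg _, (Int.fract_lt_one _).le⟩ : Int.fract (y.2 - s) ∈ Set.Icc 0 1)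

theorem compactSpace_quotient_range_diagEmb (hn : n ≠ 0) :
    CompactSpace ((QpProd n × ℝ) ⧸ (diagEmb n).toAddMonoidHom.range) :=
  QuotientAddGroup.compactSpace_of_forall_exists_sub_mem _
    ((isCompact_univ_pi fun _ => isCompact_closedBall 0 1).prod isCompact_Icc)
    fun y =>
      have ⟨g, hg⟩ := exists_sub_diagEmb_mem hn y
      ⟨diagEmb n g, ⟨g, rfl⟩, hg⟩

end Adelic

/-- the diagonal embedding of `ℤ[1/n]` into `(∏_{p ∣ n} ℚ_p) × ℝ`
is injective with discrete image and compact quotient. -/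
theorem stmt13 (n : ℤ) (hn : 2 ≤ |n|) :
    Function.Injective (diagEmb n) ∧
    DiscreteTopology ((diagEmb n).toAddMonoidHom.range : AddSubgroup (QpProd n × ℝ)) ∧
    CompactSpace ((QpProd n × ℝ) ⧸ (diagEmb n).toAddMonoidHom.range) := by
  have hn0 : n ≠ 0 := by
    rintro rfl
    norm_num at hn
  exact ⟨diagEmb_injective n, discreteTopology_range_diagEmb hn0,
    compactSpace_quotient_range_diagEmb hn0⟩
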